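/- The graph G = C₄ ∪ C₄ (two vertex-disjoint 4-cycles on 8 vertices) is not uniquely embeddable: there exists an embedding σ₁ such that G ⊕ σ₁(G) is bipartite, and an embedding σ₂ such that G ⊕ σ₂(G) contains a triangle (indeed a K₄), so the two edge-sum graphs are not isomorphic. -/

import Mathlib

open SimpleGraph

/-- The cycle graph on `ZMod n`: `i` and `j` adjacent iff they differ by one. -/
def CycGraph (n : ℕ) : SimpleGraph (ZMod n) where
  Adj i j := i ≠ j ∧ (i = j + 1 ∨ j = i + 1)
  symm := by constructor; rintro i j ⟨hne, h⟩; exact ⟨hne.symm, h.symm⟩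
  loopless := by constructor; rintro i ⟨hne, _⟩; exact hne rfl

/-- `σ` is an embedding of `G` into its complement. -/
def IsGraphEmbedding {V : Type*} (G : SimpleGraph V) (σ : Equiv.Perm V) : Prop :=
  ∀ x y, G.Adj x y → ¬ G.Adj (σ x) (σ y)

/-- The edge sum `G ⊕ σ(G)`. -/
def EdgeSum {V : Type*} (G : SimpleGraph V) (σ : Equiv.Perm V) : SimpleGraph V :=
  G ⊔ G.map σ.toEmbedding

/-- Vertex-disjoint union of two graphs. -/
def DisjUnion {α β : Type*} (G : SimpleGraph α) (H : SimpleGraph β) :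
    SimpleGraph (α ⊕ β) where
  Adj x y :=
    (∃ a b, x = Sum.inl a ∧ y = Sum.inl b ∧ G.Adj a b) ∨
    (∃ a b, x = Sum.inr a ∧ y = Sum.inr b ∧ H.Adj a b)
  symm := by
    constructor; rintro x y (⟨a, b, rfl, rfl, h⟩ | ⟨a, b, rfl, rfl, h⟩)
    · exact Or.inl ⟨b, a, rfl, rfl, h.symm⟩
    · exact Or.inr ⟨b, a, rfl, rfl, h.symm⟩
  loopless := by
    constructor; rintro x (⟨a, b, rfl, h, hadj⟩ | ⟨a, b, rfl, h, hadj⟩) <;>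
      · cases h; exact hadj.ne rfl

/-!
Colour `C₄ ∪ C₄` by the parity of the position on each cycle. Exchanging vertex `0` of one cycle
with vertex `0` of the other, and likewise vertex `2`, is an embedding preserving this colouring,
so its edge sum is bipartite. Another embedding sends one edge of each cycle to the two diagonals
of the first cycle, whose vertices then span a `K₄` in the edge sum. A bipartite graph contains
no triangle, so the two edge sums are not isomorphic.
-/

section EdgeSum

variable {V : Type*} {G : SimpleGraph V} {σ : Equiv.Perm V}

theorem edgeSum_adj {x y : V} :
    (EdgeSum G σ).Adj x y ↔ G.Adj x y ∨ G.Adj (σ.symm x) (σ.symm y) := by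
  rw [EdgeSum, ← comap_symm]
  rfl

instance [DecidableRel G.Adj] : DecidableRel (EdgeSum G σ).Adj :=
  fun _ _ => decidable_of_iff _ edgeSum_adj.symm

instance [Fintype V] [DecidableRel G.Adj] : Decidable (IsGraphEmbedding G σ) :=
  inferInstanceAs (Decidable (∀ x y, G.Adj x y → ¬ G.Adj (σ x) (σ y)))

theorem SimpleGraph.Coloring.colorable_edgeSum {α : Type*} [Fintype α] (C : G.Coloring α)
    (hC : ∀ v, C (σ v) = C v) : (EdgeSum G σ).Colorable (Fintype.card α) := by
  refine (Coloring.mk C fun {x y} h => ?_).colorable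
  rcases edgeSum_adj.mp h with h | h
  · exact C.valid h
  · simpa only [← hC (σ.symm x), ← hC (σ.symm y), Equiv.apply_symm_apply] using C.valid h

end EdgeSum

section DisjUnion

variable {α β : Type*} {G : SimpleGraph α} {H : SimpleGraph β}

theorem disjUnion_eq_sum : DisjUnion G H = G ⊕g H := by
  ext (a | b) (a' | b') <;> simp [DisjUnion]

instance SimpleGraph.decidableRelSumAdj [DecidableRel G.Adj] [DecidableRel H.Adj] :
    DecidableRel (G ⊕g H).Adj
  | .inl a, .inl a' => inferInstanceAs (Decidable (G.Adj a a'))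
  | .inr b, .inr b' => inferInstanceAs (Decidable (H.Adj b b'))
  | .inl _, .inr _ => isFalse (by simp)
  | .inr _, .inl _ => isFalse (by simp)

instance [DecidableRel G.Adj] [DecidableRel H.Adj] : DecidableRel (DisjUnion G H).Adj :=
  fun _ _ => decidable_of_iff _ (by rw [disjUnion_eq_sum])

def SimpleGraph.Coloring.disjUnion {γ : Type*} (cG : G.Coloring γ) (cH : H.Coloring γ) :
    (DisjUnion G H).Coloring γ :=
  Coloring.mk (Sum.elim cG cH) fun h => (cG.sum cH).valid (by rwa [disjUnion_eq_sum] at h)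

end DisjUnion

instance (n : ℕ) : DecidableRel (CycGraph n).Adj :=
  fun i j => inferInstanceAs (Decidable (i ≠ j ∧ (i = j + 1 ∨ j = i + 1)))

def cycGraphParityColoring {n : ℕ} (hn : 2 ∣ n) : (CycGraph n).Coloring (ZMod 2) :=
  Coloring.mk (ZMod.castHom hn (ZMod 2)) fun {i j} ⟨_, h⟩ => by
    rcases h with rfl | rfl <;> simp [-ZMod.castHom_apply, map_add]

theorem SimpleGraph.IsNClique.exists_isNClique_of_le {V : Type*} {G : SimpleGraph V}
    {s : Finset V} {m n : ℕ} (hs : G.IsNClique n s) (hmn : m ≤ n) :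
    ∃ t, G.IsNClique m t :=
  not_forall_not.mp fun hfree => CliqueFree.mono hmn hfree s hs

theorem not_nonempty_iso_of_colorable_of_isNClique {V W : Type*} {G : SimpleGraph V}
    {H : SimpleGraph W} {n : ℕ} {s : Finset W} (hG : G.Colorable n)
    (hH : H.IsNClique (n + 1) s) : ¬ Nonempty (G ≃g H) :=
  fun ⟨e⟩ => ((colorable_congr e).mp hG).cliqueFree n.lt_succ_self s hH

def swapEvens : Equiv.Perm (ZMod 4 ⊕ ZMod 4) :=
  Equiv.swap (.inl 0) (.inr 0) * Equiv.swap (.inl 2) (.inr 2)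

/-- Maps the edges `inl 0 — inl 1` and `inr 0 — inr 1` to the diagonals `inl 0 — inl 2` and
`inl 1 — inl 3`. -/
def diagonalsPerm : Equiv.Perm (ZMod 4 ⊕ ZMod 4) :=
  [.inl 1, .inl 2, .inr 0].formPerm * [.inl 3, .inr 2, .inr 1].formPerm

theorem colorable_edgeSum_swapEvens :
    (EdgeSum (DisjUnion (CycGraph 4) (CycGraph 4)) swapEvens).Colorable 2 := by
  let C := cycGraphParityColoring (n := 4) (by norm_num)
  simpa only [ZMod.card] using (C.disjUnion C).colorable_edgeSum (σ := swapEvens) (by decide)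

theorem isNClique_four_edgeSum_diagonalsPerm :
    (EdgeSum (DisjUnion (CycGraph 4) (CycGraph 4)) diagonalsPerm).IsNClique 4
      {.inl 0, .inl 1, .inl 2, .inl 3} := by
  decide

/-- `C₄ ∪ C₄` is not uniquely embeddable: one embedding gives a bipartite edge-sum, another
gives an edge-sum containing a triangle (indeed a `K₄`), so the two edge-sums are not
isomorphic. -/
theorem c4_c4_not_uniquely_embeddable :
    ∃ σ₁ σ₂ : Equiv.Perm (ZMod 4 ⊕ ZMod 4),
      IsGraphEmbedding (DisjUnion (CycGraph 4) (CycGraph 4)) σ₁ ∧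
      IsGraphEmbedding (DisjUnion (CycGraph 4) (CycGraph 4)) σ₂ ∧
      (EdgeSum (DisjUnion (CycGraph 4) (CycGraph 4)) σ₁).Colorable 2 ∧
      (∃ t : Finset (ZMod 4 ⊕ ZMod 4),
        (EdgeSum (DisjUnion (CycGraph 4) (CycGraph 4)) σ₂).IsNClique 3 t) ∧
      (∃ s : Finset (ZMod 4 ⊕ ZMod 4),
        (EdgeSum (DisjUnion (CycGraph 4) (CycGraph 4)) σ₂).IsNClique 4 s) ∧
      ¬ Nonempty (EdgeSum (DisjUnion (CycGraph 4) (CycGraph 4)) σ₁ ≃g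
        EdgeSum (DisjUnion (CycGraph 4) (CycGraph 4)) σ₂) := by
  obtain ⟨t, ht⟩ :=
    isNClique_four_edgeSum_diagonalsPerm.exists_isNClique_of_le (by norm_num : 3 ≤ 4)
  exact ⟨swapEvens, diagonalsPerm, by decide, by decide, colorable_edgeSum_swapEvens, ⟨t, ht⟩,
    ⟨_, isNClique_four_edgeSum_diagonalsPerm⟩,
    not_nonempty_iso_of_colorable_of_isNClique colorable_edgeSum_swapEvens ht⟩
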